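/- Consider an irreducible HS lifting cascade from a base filter bank whose two filters both have support interval [−r^(−1), r^(−1)−1] (concentric, equal-length, centered at −1/2), using WA lifting filters S_n with support intervals [−t^(n), t^(n)], t^(n) ≥ 1. Then for each n ≥ 0, both intermediate filters E^(n)_0, E^(n)_1 have support intervals centered at −1/2, and the lifted filter's support radius satisfies r^(n)_{m_n} = r^(n)_{1−m_n} + 2t^(n), with r^(0)_{1−m_0} = r^(−1). -/

import Mathlib

noncomputable section

/-- FIR filters: Laurent polynomials over ℝ, `F(z) = Σ f(n) z^{-n}`,
represented by their coefficient function `n ↦ f n`; multiplication is convolution. -/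
abbrev Filt := AddMonoidAlgebra ℝ ℤ

/-- `SuppInt f a b` : the support interval of `f` is `[a,b]` (so `f` is a
nonzero FIR filter with `f a, f b ≠ 0` and all support in `[a,b]`). -/
def SuppInt (f : Filt) (a b : ℤ) : Prop :=
  f.coeff a ≠ 0 ∧ f.coeff b ≠ 0 ∧ ∀ n, f.coeff n ≠ 0 → a ≤ n ∧ n ≤ b

/-- Upsampling: `F(z) ↦ F(z²)`, i.e. `Σ f(n) z^{-2n}`. -/
def up (f : Filt) : Filt := AddMonoidAlgebra.ofCoeff (Finsupp.mapDomain (fun n : ℤ => 2 * n) f.coeff)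

/-!
Over `ℝ` the extreme coefficients of a product multiply, so support intervals add under
convolution, and upsampling doubles them. Hence if `A` and `B` are centred at `-1/2` with radii
`a ≤ b` and `S` has support `[-t, t]` with `t ≥ 1`, then `up S * B` is centred with radius
`b + 2t > a`, and adding `A`, which lies strictly inside, keeps that interval. Since the lifted
channel alternates, the channel lifted at each step is never the wider one, so this applies at
every step of the cascade.
-/

namespace SuppInt

variable {f g : Filt} {a b c d : ℤ}

lemma mul (hf : SuppInt f a b) (hg : SuppInt g c d) : SuppInt (f * g) (a + c) (b + d) := by
  obtain ⟨hfa, hfb, hf⟩ := hf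
  obtain ⟨hgc, hgd, hg⟩ := hg
  have bounds : ∀ ⦃p q⦄, p ∈ f.coeff.support → q ∈ g.coeff.support →
      (a ≤ p ∧ p ≤ b) ∧ (c ≤ q ∧ q ≤ d) := fun p q hp hq =>
    ⟨hf p (Finsupp.mem_support_iff.1 hp), hg q (Finsupp.mem_support_iff.1 hq)⟩
  have lower : UniqueAdd f.coeff.support g.coeff.support a c := fun p q hp hq _ => by
    have := bounds hp hq; omega
  have upper : UniqueAdd f.coeff.support g.coeff.support b d := fun p q hp hq _ => by
    have := bounds hp hq; omega
  refine ⟨?_, ?_, fun n hn => ?_⟩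
  · rw [AddMonoidAlgebra.coeff_mul_add_of_uniqueAdd lower]
    exact mul_ne_zero hfa hgc
  · rw [AddMonoidAlgebra.coeff_mul_add_of_uniqueAdd upper]
    exact mul_ne_zero hfb hgd
  · classical
    obtain ⟨p, hp, q, hq, rfl⟩ := Finset.mem_add.1
      (AddMonoidAlgebra.support_coeff_mul_subset f g (Finsupp.mem_support_iff.2 hn))
    have := bounds hp hq
    omega

lemma up (hf : SuppInt f a b) : SuppInt (up f) (2 * a) (2 * b) := by
  obtain ⟨hfa, hfb, hf⟩ := hf
  have up_coeff_two_mul : ∀ n, (_root_.up f).coeff (2 * n) = f.coeff n :=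
    Finsupp.mapDomain_apply (fun _ _ h => by omega) f.coeff
  refine ⟨by rwa [up_coeff_two_mul], by rwa [up_coeff_two_mul], fun n hn => ?_⟩
  classical
  obtain ⟨k, hk, rfl⟩ :=
    Finset.mem_image.1 (Finsupp.mapDomain_support (Finsupp.mem_support_iff.2 hn))
  have := hf k (Finsupp.mem_support_iff.1 hk)
  omega

lemma add_of_lt (hf : SuppInt f a b) (hg : SuppInt g c d) (hca : c < a) (hbd : b < d) :
    SuppInt (f + g) c d := by
  obtain ⟨-, -, hf⟩ := hf
  obtain ⟨hgc, hgd, hg⟩ := hg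
  have hf_zero : ∀ n, n < a ∨ b < n → f.coeff n = 0 := fun n hn => by
    by_contra h
    have := hf n h
    omega
  simp only [SuppInt, AddMonoidAlgebra.coeff_add, Finsupp.add_apply]
  refine ⟨by rwa [hf_zero c (by omega), zero_add], by rwa [hf_zero d (by omega), zero_add],
    fun n hn => ?_⟩
  by_cases hfn : f.coeff n = 0
  · rw [hfn, zero_add] at hn
    exact hg n hn
  · have := hf n hfn
    omega

end SuppInt

def HasSuppRadius (f : Filt) (r : ℤ) : Prop := SuppInt f (-r) (r - 1)

lemma HasSuppRadius.lift {A B S : Filt} {a b t : ℤ} (hA : HasSuppRadius A a)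
    (hB : HasSuppRadius B b) (hS : SuppInt S (-t) t) (hlt : a < b + 2 * t) :
    HasSuppRadius (A + up S * B) (b + 2 * t) := by
  have hSB : SuppInt (up S * B) (-(b + 2 * t)) (b + 2 * t - 1) := by
    convert hS.up.mul hB using 1 <;> ring
  exact hA.add_of_lt hSB (by omega) (by omega)

section Cascade

variable {N : ℕ} {S : ℕ → Filt} {m : ℕ → Bool} {t : ℕ → ℤ} {P : ℕ → Bool → Filt}
  {B : Bool → Filt} {rb : ℤ}

/-- `cascadeRadius rb m t n` is the paper's `r⁽ⁿ⁻¹⁾`, the radii after `n` lifting steps. -/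
def cascadeRadius (rb : ℤ) (m : ℕ → Bool) (t : ℕ → ℤ) : ℕ → Bool → ℤ
  | 0 => fun _ => rb
  | n + 1 => Function.update (cascadeRadius rb m t n) (m n)
      (cascadeRadius rb m t n (!m n) + 2 * t n)

lemma cascadeRadius_succ_self (n : ℕ) :
    cascadeRadius rb m t (n + 1) (m n) = cascadeRadius rb m t n (!m n) + 2 * t n := by
  simp [cascadeRadius]

lemma cascadeRadius_succ_not (n : ℕ) :
    cascadeRadius rb m t (n + 1) (!m n) = cascadeRadius rb m t n (!m n) := by
  simp [cascadeRadius]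

lemma cascadeRadius_self_le_not (halt : ∀ n, m (n + 1) = !(m n))
    (ht : ∀ n, n < N → 0 ≤ t n) :
    ∀ n, n ≤ N → cascadeRadius rb m t n (m n) ≤ cascadeRadius rb m t n (!m n)
  | 0, _ => le_rfl
  | n + 1, hn => by
    rw [halt, Bool.not_not, cascadeRadius_succ_not, cascadeRadius_succ_self]
    linarith [ht n hn]

lemma hasSuppRadius_cascade (halt : ∀ n, m (n + 1) = !(m n))
    (ht : ∀ n, n < N → 1 ≤ t n)
    (hSsupp : ∀ n, n < N → SuppInt (S n) (-(t n)) (t n))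
    (hBsupp : ∀ i, SuppInt (B i) (-rb) (rb - 1))
    (hbase : ∀ i, P 0 i = B i)
    (hlift : ∀ n, n < N → P (n + 1) (m n) = P n (m n) + up (S n) * P n (!(m n)))
    (hkeep : ∀ n, n < N → P (n + 1) (!(m n)) = P n (!(m n))) :
    ∀ n, n ≤ N → ∀ i, HasSuppRadius (P n i) (cascadeRadius rb m t n i)
  | 0, _, i => by rw [hbase]; exact hBsupp i
  | n + 1, hn, i => by
    have ih := hasSuppRadius_cascade halt ht hSsupp hBsupp hbase hlift hkeep n (by omega)
    have hle := cascadeRadius_self_le_not (rb := rb) (t := t) halt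
      (fun k hk => by linarith [ht k hk]) n (by omega)
    obtain rfl | rfl := Bool.eq_or_eq_not i (m n)
    · rw [hlift n hn, cascadeRadius_succ_self]
      exact (ih _).lift (ih _) (hSsupp n hn) (by linarith [ht n hn])
    · rw [hkeep n hn, cascadeRadius_succ_not]
      exact ih _

end Cascade

theorem hs_support_formula_general (N : ℕ) (S : ℕ → Filt) (m : ℕ → Bool) (t : ℕ → ℤ)
    (P : ℕ → Bool → Filt) (B : Bool → Filt) (rb : ℤ)
    (halt : ∀ n, m (n + 1) = !(m n))
    (ht : ∀ n, n < N → 1 ≤ t n)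
    (hSsupp : ∀ n, n < N → SuppInt (S n) (-(t n)) (t n))
    (hBsupp : ∀ i, SuppInt (B i) (-rb) (rb - 1))
    (hbase : ∀ i, P 0 i = B i)
    (hlift : ∀ n, n < N → P (n + 1) (m n) = P n (m n) + up (S n) * P n (!(m n)))
    (hkeep : ∀ n, n < N → P (n + 1) (!(m n)) = P n (!(m n))) :
    ∀ n, n < N → ∃ r0 r1 : ℤ,
      SuppInt (P (n + 1) false) (-r0) (r0 - 1) ∧
      SuppInt (P (n + 1) true) (-r1) (r1 - 1) ∧
      cond (m n) r1 r0 = cond (m n) r0 r1 + 2 * t n ∧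
      (n = 0 → cond (m 0) r0 r1 = rb) := by
  intro n hn
  have hr := hasSuppRadius_cascade halt ht hSsupp hBsupp hbase hlift hkeep (n + 1) hn
  have cond_eq (r : Bool → ℤ) (b : Bool) : cond b (r true) (r false) = r b := by cases b <;> rfl
  have cond_swap (r : Bool → ℤ) (b : Bool) : cond b (r false) (r true) = r (!b) := by
    cases b <;> rfl
  refine ⟨_, _, hr false, hr true, ?_, ?_⟩
  · rw [cond_eq, cond_swap, cascadeRadius_succ_self, cascadeRadius_succ_not]
  · rintro rfl
    rw [cond_swap, cascadeRadius_succ_not]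
    rfl

/-- the HS support interval formula.  For an irreducible HS lifting
cascade from a concentric equal-length base filter bank (both base filters with
support interval `[−r⁽⁻¹⁾, r⁽⁻¹⁾−1]`), using WA lifting filters `S n` with
support intervals `[−t n, t n]`, `t n ≥ 1`, both intermediate filters are
centered at −1/2 and the lifted radius satisfies
`r⁽ⁿ⁾_{mₙ} = r⁽ⁿ⁾_{1−mₙ} + 2 tⁿ` with `r⁽⁰⁾_{1−m₀} = r⁽⁻¹⁾`. -/
theorem hs_support_formula (N : ℕ) (S : ℕ → Filt) (m : ℕ → Bool) (t : ℕ → ℤ)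
    (P : ℕ → Bool → Filt) (B : Bool → Filt) (rb : ℤ)
    (hrb : 1 ≤ rb)
    (halt : ∀ n, m (n + 1) = !(m n))
    (ht : ∀ n, n < N → 1 ≤ t n)
    (hSanti : ∀ n, n < N → ∀ k : ℤ, (S n).coeff (-k) = -((S n).coeff k))
    (hSsupp : ∀ n, n < N → SuppInt (S n) (-(t n)) (t n))
    (hBsupp : ∀ i, SuppInt (B i) (-rb) (rb - 1))
    (hbase : ∀ i, P 0 i = B i)
    (hlift : ∀ n, n < N → P (n + 1) (m n) = P n (m n) + up (S n) * P n (!(m n)))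
    (hkeep : ∀ n, n < N → P (n + 1) (!(m n)) = P n (!(m n))) :
    ∀ n, n < N → ∃ r0 r1 : ℤ,
      SuppInt (P (n + 1) false) (-r0) (r0 - 1) ∧
      SuppInt (P (n + 1) true) (-r1) (r1 - 1) ∧
      cond (m n) r1 r0 = cond (m n) r0 r1 + 2 * t n ∧
      (n = 0 → cond (m 0) r0 r1 = rb) :=
  hs_support_formula_general N S m t P B rb halt ht hSsupp hBsupp hbase hlift hkeep
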